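/- Poincaré covariance of the creation operators: for (a, λ) ∈ ℝ² × ℝ define the unitary Uₙ(a,λ) on L²(ℝⁿ, ℂ) by (Uₙ(a,λ)ψ)(θ₁,…,θₙ) = exp(i·Σ_{j=1}^n m(cosh(θⱼ)a₀ − sinh(θⱼ)a₁))·ψ(θ₁−λ,…,θₙ−λ). Then: (a) Uₙ(a,λ) commutes with Pₙ; (b) for every φ ∈ L²(ℝ) and ψ ∈ L²(ℝⁿ) with Pₙψ = ψ, U_{n+1}(a,λ)·P_{n+1}(φ ⊗ (Uₙ(a,λ)*ψ)) = P_{n+1}((U₁(a,λ)φ) ⊗ ψ). -/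

import Mathlib

open MeasureTheory Complex

noncomputable section

/-- The `n`-fold L² space over rapidity variables. -/
abbrev Hsp (n : ℕ) : Type := Lp ℂ 2 (volume : Measure (Fin n → ℝ))

/-- The transposition τᵢ = (i, i+1) (0-based) in the symmetric group Sₙ. -/
def tau (n i : ℕ) (h : i + 1 < n) : Equiv.Perm (Fin n) :=
  Equiv.swap ⟨i, Nat.lt_of_succ_lt h⟩ ⟨i + 1, h⟩

/-- `D` is the S₂-twisted representation of Sₙ on L²(ℝⁿ) determined on the
transpositions τᵢ by `(D(τᵢ)ψ)(θ) = S₂(θ_{i+1} − θ_i)·ψ(θ ∘ τᵢ)`. -/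
def IsZamoRep (S₂ : ℝ → ℂ) (n : ℕ)
    (D : Equiv.Perm (Fin n) →* unitary (Hsp n →L[ℂ] Hsp n)) : Prop :=
  ∀ (i : ℕ) (hi : i + 1 < n) (ψ : Hsp n),
    ∀ᵐ θ ∂(volume : Measure (Fin n → ℝ)),
      ((D (tau n i hi) : Hsp n →L[ℂ] Hsp n) ψ) θ
        = S₂ (θ ⟨i + 1, hi⟩ - θ ⟨i, Nat.lt_of_succ_lt hi⟩)
            * ψ (fun m => θ (tau n i hi m))

/-- The symmetrization Pₙ = (1/n!)·Σ_{π ∈ Sₙ} Dₙ(π). -/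
def symProj {n : ℕ}
    (D : Equiv.Perm (Fin n) →* unitary (Hsp n →L[ℂ] Hsp n)) :
    Hsp n →L[ℂ] Hsp n :=
  (n.factorial : ℂ)⁻¹ • ∑ π : Equiv.Perm (Fin n), (D π : Hsp n →L[ℂ] Hsp n)

/-!
The phase `exp (i Σⱼ p(θⱼ)·a)` and the shift `θ ↦ θ - λ` are both symmetric in the rapidities,
and the factor `S₂(θᵢ₊₁ - θᵢ)` only sees rapidity differences; so `Uₙ` commutes with every
`Dₙ(τᵢ)`, hence with all of `Dₙ` (the `τᵢ` generate `Sₙ`) and with its average `Pₙ`.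
The phase is additive over particles, so `Uₙ₊₁ (φ ⊗ χ) = U₁φ ⊗ Uₙχ`. A unimodular multiplier
composed with a measure-preserving shift is unitary, so `χ = Uₙ*ψ` gives `Uₙχ = ψ`, and (b) follows
by moving `Uₙ₊₁` past `Pₙ₊₁`.
-/

/-- The Minkowski pairing of the on-shell momentum `m (cosh t, sinh t)` with `a`. -/
def momentumPairing (m : ℝ) (a : ℝ × ℝ) (t : ℝ) : ℝ :=
  m * (Real.cosh t * a.1 - Real.sinh t * a.2)

def translationPhase (m : ℝ) (a : ℝ × ℝ) {k : ℕ} (θ : Fin k → ℝ) : ℂ :=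
  exp (I * ((∑ j, momentumPairing m a (θ j) : ℝ) : ℂ))

def IsPoincareOperator (m : ℝ) (a : ℝ × ℝ) (lam : ℝ) {k : ℕ} (V : Hsp k →L[ℂ] Hsp k) : Prop :=
  ∀ ψ : Hsp k, ∀ᵐ θ ∂(volume : Measure (Fin k → ℝ)),
    V ψ θ = translationPhase m a θ * ψ (fun j => θ j - lam)

def IsPoincareOperator₁ (m : ℝ) (a : ℝ × ℝ) (lam : ℝ)
    (V : Lp ℂ 2 (volume : Measure ℝ) →L[ℂ] Lp ℂ 2 (volume : Measure ℝ)) : Prop :=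
  ∀ φ : Lp ℂ 2 (volume : Measure ℝ), ∀ᵐ t ∂(volume : Measure ℝ),
    V φ t = exp (I * (momentumPairing m a t : ℂ)) * φ (t - lam)

section Phase

variable (m : ℝ) (a : ℝ × ℝ) {k : ℕ}

lemma norm_translationPhase (θ : Fin k → ℝ) : ‖translationPhase m a θ‖ = 1 := by
  simp [translationPhase, Complex.norm_exp]

lemma translationPhase_comp_perm (π : Equiv.Perm (Fin k)) (θ : Fin k → ℝ) :
    translationPhase m a (fun j => θ (π j)) = translationPhase m a θ := by
  simp only [translationPhase, Equiv.sum_comp π fun j => momentumPairing m a (θ j)]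

lemma translationPhase_succ (θ : Fin (k + 1) → ℝ) :
    translationPhase m a θ
      = exp (I * (momentumPairing m a (θ 0) : ℂ)) * translationPhase m a (Fin.tail θ) := by
  simp only [translationPhase, Fin.sum_univ_succ, ofReal_add, mul_add, exp_add, Fin.tail]

lemma continuous_translationPhase : Continuous (translationPhase m a (k := k)) := by
  unfold translationPhase momentumPairing
  fun_prop

end Phase

lemma measurePreserving_sub_const (k : ℕ) (lam : ℝ) :
    MeasurePreserving (fun (θ : Fin k → ℝ) (j : Fin k) => θ j - lam) volume volume :=
  measurePreserving_sub_right volume fun _ => lam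

lemma measurePreserving_add_const (k : ℕ) (lam : ℝ) :
    MeasurePreserving (fun (θ : Fin k → ℝ) (j : Fin k) => θ j + lam) volume volume :=
  measurePreserving_add_right volume fun _ => lam

lemma measurePreserving_comp_perm {k : ℕ} (π : Equiv.Perm (Fin k)) :
    MeasurePreserving (fun (θ : Fin k → ℝ) (j : Fin k) => θ (π j)) volume volume := by
  convert volume_measurePreserving_piCongrLeft (fun _ : Fin k => ℝ) π.symm using 1
  ext θ i
  simp [MeasurableEquiv.piCongrLeft, Equiv.piCongrLeft, Equiv.piCongrLeft']

lemma quasiMeasurePreserving_apply_zero (α : Type*) [MeasureSpace α]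
    [SigmaFinite (volume : Measure α)] (n : ℕ) :
    Measure.QuasiMeasurePreserving (fun θ : Fin (n + 1) → α => θ 0) volume volume :=
  Measure.quasiMeasurePreserving_fst.comp
    (volume_preserving_piFinSuccAbove (fun _ : Fin (n + 1) => α) 0).quasiMeasurePreserving

lemma quasiMeasurePreserving_tail (α : Type*) [MeasureSpace α]
    [SigmaFinite (volume : Measure α)] (n : ℕ) :
    Measure.QuasiMeasurePreserving (fun θ : Fin (n + 1) → α => Fin.tail θ) volume volume := by
  have h : (fun θ : Fin (n + 1) → α => Fin.tail θ)
      = Prod.snd ∘ MeasurableEquiv.piFinSuccAbove (fun _ => α) 0 := by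
    ext θ : 1
    simp
  rw [h]
  exact Measure.quasiMeasurePreserving_snd.comp
    (volume_preserving_piFinSuccAbove (fun _ : Fin (n + 1) => α) 0).quasiMeasurePreserving

lemma eLpNorm_mul_comp_of_norm_eq_one {α β : Type*} [MeasurableSpace α] [MeasurableSpace β]
    {μ : Measure α} {ν : Measure β} {p : ENNReal} {c : α → ℂ} (hc : ∀ x, ‖c x‖ = 1)
    {T : α → β} (hT : MeasurePreserving T μ ν) {f : β → ℂ} (hf : AEStronglyMeasurable f ν) :
    eLpNorm (fun x => c x * f (T x)) p μ = eLpNorm f p ν := by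
  rw [← eLpNorm_comp_measurePreserving hf hT]
  exact eLpNorm_congr_norm_ae (.of_forall fun x => by simp [hc])

lemma memLp_prod_mul {α β : Type*} [MeasurableSpace α] [MeasurableSpace β]
    {μ : Measure α} {ν : Measure β} [SFinite ν] {p : ENNReal} (hp0 : p ≠ 0) (hpt : p ≠ ⊤)
    {f : α → ℂ} {g : β → ℂ} (hf : MemLp f p μ) (hg : MemLp g p ν) :
    MemLp (fun z : α × β => f z.1 * g z.2) p (μ.prod ν) := by
  have hmeas : AEStronglyMeasurable (fun z : α × β => f z.1 * g z.2) (μ.prod ν) :=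
    hf.1.comp_fst.mul hg.1.comp_snd
  rw [← integrable_norm_rpow_iff hmeas hp0 hpt]
  simp_rw [norm_mul, Real.mul_rpow (norm_nonneg _) (norm_nonneg _)]
  exact ((integrable_norm_rpow_iff hf.1 hp0 hpt).2 hf).mul_prod
    ((integrable_norm_rpow_iff hg.1 hp0 hpt).2 hg)

lemma memLp_apply_zero_mul_tail {α : Type*} [MeasureSpace α] [SigmaFinite (volume : Measure α)]
    {n : ℕ} {p : ENNReal} (hp0 : p ≠ 0) (hpt : p ≠ ⊤) {f : α → ℂ} {g : (Fin n → α) → ℂ}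
    (hf : MemLp f p volume) (hg : MemLp g p volume) :
    MemLp (fun θ : Fin (n + 1) → α => f (θ 0) * g (Fin.tail θ)) p volume := by
  have h : (fun θ : Fin (n + 1) → α => f (θ 0) * g (Fin.tail θ))
      = (fun z => f z.1 * g z.2) ∘ MeasurableEquiv.piFinSuccAbove (fun _ => α) 0 := by
    ext θ : 1
    simp
  rw [h]
  exact (memLp_prod_mul hp0 hpt hf hg).comp_measurePreserving
    (volume_preserving_piFinSuccAbove (fun _ : Fin (n + 1) => α) 0)

/-- The vector `f ⊗ χ` of `L²(ℝⁿ⁺¹)`, with `f` in the first rapidity. -/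
def tensorLp {n : ℕ} (f : Lp ℂ 2 (volume : Measure ℝ)) (χ : Hsp n) : Hsp (n + 1) :=
  (memLp_apply_zero_mul_tail two_ne_zero ENNReal.ofNat_ne_top (Lp.memLp f) (Lp.memLp χ)).toLp _

lemma coeFn_tensorLp {n : ℕ} (f : Lp ℂ 2 (volume : Measure ℝ)) (χ : Hsp n) :
    tensorLp f χ =ᵐ[volume] fun θ => f (θ 0) * χ (Fin.tail θ) :=
  MemLp.coeFn_toLp _

lemma Submonoid.commute_of_closure_eq_top {M N : Type*} [Monoid M] [Monoid N] (f : M →* N)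
    {s : Set M} (hs : Submonoid.closure s = ⊤) {x : N} (h : ∀ g ∈ s, Commute x (f g)) (g : M) :
    Commute x (f g) := by
  have hle : Submonoid.closure s ≤ (Submonoid.centralizer {x}).comap f :=
    Submonoid.closure_le.2 fun g hg =>
      Submonoid.mem_centralizer_iff.2 fun _ hy => Set.mem_singleton_iff.1 hy ▸ (h g hg).eq
  exact Submonoid.mem_centralizer_iff.1 (hle (hs ▸ Submonoid.mem_top g)) x rfl

lemma closure_tau_eq_top (k : ℕ) :
    Submonoid.closure {σ | ∃ (i : ℕ) (hi : i + 1 < k), tau k i hi = σ} = ⊤ := by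
  cases k with
  | zero => exact Subsingleton.elim _ _
  | succ j =>
    rw [← Equiv.Perm.mclosure_swap_castSucc_succ j]
    congr 1
    ext σ
    exact ⟨fun ⟨i, hi, hσ⟩ => ⟨⟨i, Nat.lt_of_succ_lt_succ hi⟩, hσ⟩,
      fun ⟨i, hσ⟩ => ⟨i, Nat.succ_lt_succ i.isLt, hσ⟩⟩

namespace IsPoincareOperator

variable {m : ℝ} {a : ℝ × ℝ} {lam : ℝ} {S₂ : ℝ → ℂ}

lemma norm_map {k : ℕ} {V : Hsp k →L[ℂ] Hsp k} (hV : IsPoincareOperator m a lam V) (x : Hsp k) :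
    ‖V x‖ = ‖x‖ := by
  rw [Lp.norm_def, Lp.norm_def, eLpNorm_congr_ae (hV x),
    eLpNorm_mul_comp_of_norm_eq_one (norm_translationPhase m a) (measurePreserving_sub_const k lam)
      (Lp.aestronglyMeasurable x)]

lemma surjective {k : ℕ} {V : Hsp k →L[ℂ] Hsp k} (hV : IsPoincareOperator m a lam V) :
    Function.Surjective V := by
  intro ψ
  have hc : ∀ η : Fin k → ℝ, ‖starRingEnd ℂ (translationPhase m a fun j => η j + lam)‖ = 1 :=
    fun η => by rw [RCLike.norm_conj, norm_translationPhase]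
  have hmem : MemLp (fun η : Fin k → ℝ =>
      starRingEnd ℂ (translationPhase m a fun j => η j + lam) * ψ (fun j => η j + lam)) 2 volume :=
    ⟨((continuous_conj.comp ((continuous_translationPhase m a).comp
        (by fun_prop))).aestronglyMeasurable).mul
      ((Lp.aestronglyMeasurable ψ).comp_measurePreserving (measurePreserving_add_const k lam)),
      by rw [eLpNorm_mul_comp_of_norm_eq_one hc (measurePreserving_add_const k lam)
            (Lp.aestronglyMeasurable ψ)]
         exact Lp.eLpNorm_lt_top ψ⟩
  refine ⟨hmem.toLp _, Lp.ext ?_⟩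
  filter_upwards [hV (hmem.toLp _),
    (measurePreserving_sub_const k lam).quasiMeasurePreserving.ae hmem.coeFn_toLp] with θ hθ hθ'
  have hconj : starRingEnd ℂ (translationPhase m a θ) * translationPhase m a θ = 1 := by
    rw [conj_mul', norm_translationPhase, ofReal_one, one_pow]
  simp only [hθ, hθ', sub_add_cancel]
  linear_combination ψ θ * hconj

lemma apply_adjoint_apply {k : ℕ} {V : Hsp k →L[ℂ] Hsp k} (hV : IsPoincareOperator m a lam V)
    (ψ : Hsp k) : V (ContinuousLinearMap.adjoint V ψ) = ψ := by
  obtain ⟨x, rfl⟩ := hV.surjective ψ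
  rw [← ContinuousLinearMap.comp_apply _ V, V.norm_map_iff_adjoint_comp_self.1 hV.norm_map]
  rfl

lemma commute_tau {k : ℕ} {V : Hsp k →L[ℂ] Hsp k} (hV : IsPoincareOperator m a lam V)
    {D : Equiv.Perm (Fin k) →* unitary (Hsp k →L[ℂ] Hsp k)} (hD : IsZamoRep S₂ k D)
    (i : ℕ) (hi : i + 1 < k) : Commute V (D (tau k i hi) : Hsp k →L[ℂ] Hsp k) := by
  refine ContinuousLinearMap.ext fun ψ => Lp.ext ?_
  filter_upwards [hV ((D (tau k i hi) : Hsp k →L[ℂ] Hsp k) ψ),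
    (measurePreserving_sub_const k lam).quasiMeasurePreserving.ae (hD i hi ψ), hD i hi (V ψ),
    (measurePreserving_comp_perm (tau k i hi)).quasiMeasurePreserving.ae (hV ψ)]
    with θ hVD hDshift hDV hVperm
  rw [mul_apply_eq_comp, mul_apply_eq_comp, hVD, hDshift, hDV, hVperm, sub_sub_sub_cancel_right,
    translationPhase_comp_perm]
  ring

lemma commute_zamoRep {k : ℕ} {V : Hsp k →L[ℂ] Hsp k} (hV : IsPoincareOperator m a lam V)
    {D : Equiv.Perm (Fin k) →* unitary (Hsp k →L[ℂ] Hsp k)} (hD : IsZamoRep S₂ k D)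
    (π : Equiv.Perm (Fin k)) : Commute V (D π : Hsp k →L[ℂ] Hsp k) :=
  Submonoid.commute_of_closure_eq_top ((unitary _).subtype.comp D) (closure_tau_eq_top k)
    (by rintro _ ⟨i, hi, rfl⟩; exact hV.commute_tau hD i hi) π

lemma commute_symProj {k : ℕ} {V : Hsp k →L[ℂ] Hsp k} (hV : IsPoincareOperator m a lam V)
    {D : Equiv.Perm (Fin k) →* unitary (Hsp k →L[ℂ] Hsp k)} (hD : IsZamoRep S₂ k D) :
    Commute V (symProj D) :=
  (Commute.sum_right _ _ _ fun π _ => hV.commute_zamoRep hD π).smul_right _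

lemma apply_tensorLp {n : ℕ} {V : Hsp (n + 1) →L[ℂ] Hsp (n + 1)}
    (hV : IsPoincareOperator m a lam V) {V₁ : Lp ℂ 2 (volume : Measure ℝ) →L[ℂ] Lp ℂ 2 volume}
    (hV₁ : IsPoincareOperator₁ m a lam V₁) {W : Hsp n →L[ℂ] Hsp n}
    (hW : IsPoincareOperator m a lam W) (f : Lp ℂ 2 (volume : Measure ℝ)) (χ : Hsp n) :
    V (tensorLp f χ) = tensorLp (V₁ f) (W χ) := by
  refine Lp.ext ?_
  filter_upwards [hV (tensorLp f χ),
    (measurePreserving_sub_const (n + 1) lam).quasiMeasurePreserving.ae (coeFn_tensorLp f χ),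
    coeFn_tensorLp (V₁ f) (W χ), (quasiMeasurePreserving_apply_zero ℝ n).ae (hV₁ f),
    (quasiMeasurePreserving_tail ℝ n).ae (hW χ)] with θ hVθ hshift htensor hV₁θ hWθ
  have htail : Fin.tail (fun j => θ j - lam) = fun j => Fin.tail θ j - lam := rfl
  rw [hVθ, hshift, htensor, hV₁θ, hWθ, translationPhase_succ, htail]
  ring

end IsPoincareOperator

theorem statement10 (S₂ : ℝ → ℂ)
    (m : ℝ) (a : ℝ × ℝ) (lam : ℝ)
    (n : ℕ)
    (D : ∀ k : ℕ, Equiv.Perm (Fin k) →* unitary (Hsp k →L[ℂ] Hsp k))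
    (hD : ∀ k : ℕ, IsZamoRep S₂ k (D k))
    -- the representation U(a,λ) on the k-particle spaces
    (U : ∀ k : ℕ, Hsp k →L[ℂ] Hsp k)
    (hU : ∀ (k : ℕ) (ψ : Hsp k),
      ∀ᵐ θ ∂(volume : Measure (Fin k → ℝ)),
        (U k ψ) θ
          = Complex.exp (Complex.I *
              ((∑ j : Fin k, m * (Real.cosh (θ j) * a.1 - Real.sinh (θ j) * a.2) : ℝ) : ℂ))
              * ψ (fun j => θ j - lam))
    -- the one-particle representation U₁(a,λ) on L²(ℝ)
    (U₁ : Lp ℂ 2 (volume : Measure ℝ) →L[ℂ] Lp ℂ 2 (volume : Measure ℝ))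
    (hU₁ : ∀ φ : Lp ℂ 2 (volume : Measure ℝ),
      ∀ᵐ t ∂(volume : Measure ℝ),
        (U₁ φ) t
          = Complex.exp (Complex.I *
              ((m * (Real.cosh t * a.1 - Real.sinh t * a.2) : ℝ) : ℂ)) * φ (t - lam)) :
    (U n) ∘L symProj (D n) = symProj (D n) ∘L (U n) ∧
    (∀ (φ : Lp ℂ 2 (volume : Measure ℝ)) (ψ : Hsp n), symProj (D n) ψ = ψ →
      ∃ (h1 : MemLp (fun θ : Fin (n + 1) → ℝ =>
            φ (θ 0) * ((ContinuousLinearMap.adjoint (U n)) ψ) (Fin.tail θ)) 2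
          (volume : Measure (Fin (n + 1) → ℝ)))
        (h2 : MemLp (fun θ : Fin (n + 1) → ℝ => (U₁ φ) (θ 0) * ψ (Fin.tail θ)) 2
          (volume : Measure (Fin (n + 1) → ℝ))),
        (U (n + 1)) (symProj (D (n + 1)) (h1.toLp _))
          = symProj (D (n + 1)) (h2.toLp _)) := by
  have hU' : ∀ k, IsPoincareOperator m a lam (U k) := hU
  have hU₁' : IsPoincareOperator₁ m a lam U₁ := hU₁
  refine ⟨((hU' n).commute_symProj (hD n)).eq, fun φ ψ _ => ?_⟩
  refine ⟨memLp_apply_zero_mul_tail two_ne_zero ENNReal.ofNat_ne_top (Lp.memLp _) (Lp.memLp _),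
    memLp_apply_zero_mul_tail two_ne_zero ENNReal.ofNat_ne_top (Lp.memLp _) (Lp.memLp _), ?_⟩
  change U (n + 1) (symProj (D (n + 1)) (tensorLp φ _)) = symProj (D (n + 1)) (tensorLp (U₁ φ) ψ)
  rw [← mul_apply_eq_comp, ((hU' (n + 1)).commute_symProj (hD (n + 1))).eq,
    mul_apply_eq_comp, (hU' (n + 1)).apply_tensorLp hU₁' (hU' n),
    (hU' n).apply_adjoint_apply]

end
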